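/- arXiv:2109.09568 — 5 statements merged into one kernel-verified Lean document; each statement's English description precedes it below -/
import Mathlib

section
/- Suppose α_C·μ_T − α_T·γ_C > 0 and all parameters strictly positive. Then any solution (ρ_C, ρ_T) of the system (α_C·|I| − μ_C·ρ_C − γ_C·ρ_T)·ρ_C = 0, (α_T·|I| − μ_T·ρ_T + γ_T·ρ_C)·ρ_T = 0 with ρ_C ≥ 0 and ρ_T > 0 is either (0, |I|·α_T/μ_T) or the coexistence solution (|I|·(α_C·μ_T − α_T·γ_C)/(γ_T·γ_C + μ_C·μ_T), |I|·(α_T·μ_C + α_C·γ_T)/(γ_T·γ_C + μ_C·μ_T)). -/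
theorem stmt_5 (αC αT μC μT γC γT I ρC ρT : ℝ)
    (hαC : 0 < αC) (hαT : 0 < αT) (hμC : 0 < μC) (hμT : 0 < μT)
    (hγC : 0 < γC) (hγT : 0 < γT) (hI : 0 < I)
    (hcond : 0 < αC * μT - αT * γC)
    (hρC : 0 ≤ ρC) (hρT : 0 < ρT)
    (h1 : (αC * I - μC * ρC - γC * ρT) * ρC = 0)
    (h2 : (αT * I - μT * ρT + γT * ρC) * ρT = 0) :
    (ρC = 0 ∧ ρT = I * αT / μT) ∨
    (ρC = I * (αC * μT - αT * γC) / (γT * γC + μC * μT) ∧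
     ρT = I * (αT * μC + αC * γT) / (γT * γC + μC * μT)) := by
  have h2' : αT * I - μT * ρT + γT * ρC = 0 :=
    by
    rcases mul_eq_zero.mp h2 with h | h
    · exact h
    · linarith
  have hden : γT * γC + μC * μT > 0 := by positivity
  rcases mul_eq_zero.mp h1 with h | h
  · right
    constructor
    · field_simp
      nlinarith [h, h2']
    · field_simp
      nlinarith [h, h2']
  · left
    refine ⟨h, ?_⟩
    field_simp
    nlinarith [h2', h]
end

section
/- If α_C·μ_T − α_T·γ_C ≤ 0 (all parameters positive), then the only solution of the system (α_C·|I| − μ_C·ρ_C − γ_C·ρ_T)·ρ_C = 0, (α_T·|I| − μ_T·ρ_T + γ_T·ρ_C)·ρ_T = 0 with ρ_C ≥ 0 and ρ_T > 0 is (0, |I|·α_T/μ_T). -/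
theorem stmt_6 (αC αT μC μT γC γT I ρC ρT : ℝ)
    (hαC : 0 < αC) (hαT : 0 < αT) (hμC : 0 < μC) (hμT : 0 < μT)
    (hγC : 0 < γC) (hγT : 0 < γT) (hI : 0 < I)
    (hcond : αC * μT - αT * γC ≤ 0)
    (hρC : 0 ≤ ρC) (hρT : 0 < ρT)
    (h1 : (αC * I - μC * ρC - γC * ρT) * ρC = 0)
    (h2 : (αT * I - μT * ρT + γT * ρC) * ρT = 0) :
    ρC = 0 ∧ ρT = I * αT / μT := by
  have e2 : αT * I - μT * ρT + γT * ρC = 0 := by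
    rcases mul_eq_zero.mp h2 with h | h
    · exact h
    · exact absurd h hρT.ne'
  have hC : ρC = 0 := by
    rcases mul_eq_zero.mp h1 with h | h
    · have key : (μC * μT + γC * γT) * ρC = (αC * μT - αT * γC) * I := by
        linear_combination γC * e2 - μT * h
      have hle := mul_nonpos_of_nonpos_of_nonneg hcond hI.le
      have hpos : 0 < μC * μT + γC * γT := by positivity
      nlinarith
    · exact h
  refine ⟨hC, ?_⟩
  field_simp
  subst hC
  linarith
end

section
/- Let B = α_C − γ_C·α_T/μ_T − α_T and C = α_T·(γ_C·α_T/μ_T − α_C) with all parameters strictly positive. If γ_C > μ_T·α_C/α_T, then B < 0 and C > 0, hence both roots λ of λ² − B·λ + C = 0 have strictly negative real part. -/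
theorem stmt_7 (αC αT μT γC : ℝ)
    (hαC : 0 < αC) (hαT : 0 < αT) (hμT : 0 < μT) (hγC : 0 < γC)
    (hcond : μT * αC / αT < γC) :
    let B : ℝ := αC - γC * αT / μT - αT
    let C : ℝ := αT * (γC * αT / μT - αC)
    B < 0 ∧ 0 < C ∧
    ∀ lam : ℂ, lam ^ 2 - (B : ℂ) * lam + (C : ℂ) = 0 → lam.re < 0 := by
  intro B C
  have hmul : μT * αC < γC * αT := by
    rw [div_lt_iff₀ hαT] at hcond; linarith
  have h1 : αC < γC * αT / μT := by
    rw [lt_div_iff₀ hμT]; nlinarith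
  have hB : B < 0 := by simp only [B]; linarith
  have hC : 0 < C := mul_pos hαT (by linarith)
  refine ⟨hB, hC, ?_⟩
  intro lam hl
  have hre : (lam ^ 2 - (B : ℂ) * lam + (C : ℂ)).re = 0 := by rw [hl]; simp
  have him : (lam ^ 2 - (B : ℂ) * lam + (C : ℂ)).im = 0 := by rw [hl]; simp
  simp [pow_two, Complex.mul_re, Complex.mul_im] at hre him
  by_contra hcon
  push_neg at hcon
  rcases eq_or_ne lam.im 0 with h0 | h0
  · rw [h0] at hre
    nlinarith [sq_nonneg lam.re]
  · have : lam.im * (2 * lam.re - B) = 0 := by linarith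
    rcases mul_eq_zero.mp this with h | h
    · exact h0 h
    · linarith
end

section
/- Let γ_C = ζ_C·γ and γ_T = ζ_T·γ with ζ_C, ζ_T, γ > 0, and suppose condition γ < (μ_T/α_T)·(α_C/ζ_C) holds. Then the coexistence tumour population size ρ_C*(γ) = |I|·(α_C·μ_T − α_T·ζ_C·γ)/(ζ_T·ζ_C·γ² + μ_C·μ_T) is a strictly decreasing function of γ on the interval (0, (μ_T·α_C)/(α_T·ζ_C)). -/
theorem stmt_14 (αC αT μC μT ζC ζT I : ℝ)
    (hαC : 0 < αC) (hαT : 0 < αT) (hμC : 0 < μC) (hμT : 0 < μT)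
    (hζC : 0 < ζC) (hζT : 0 < ζT) (hI : 0 < I) :
    StrictAntiOn
      (fun γ : ℝ => I * (αC * μT - αT * ζC * γ) / (ζT * ζC * γ ^ 2 + μC * μT))
      (Set.Ioo 0 (μT * αC / (αT * ζC))) := by
  rintro a ⟨ha0, haU⟩ b ⟨hb0, hbU⟩ hab
  have hda : 0 < ζT * ζC * a ^ 2 + μC * μT := by positivity
  have hdb : 0 < ζT * ζC * b ^ 2 + μC * μT := by positivity
  have hbU' : αT * ζC * b < μT * αC := by
    have := (lt_div_iff₀ (by positivity : 0 < αT * ζC)).mp hbU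
    nlinarith
  simp only
  rw [div_lt_div_iff₀ hdb hda]
  have hk : 0 < (b - a) * (ζT * ζC * a * (μT * αC - αT * ζC * b) +
      αC * μT * (ζT * ζC) * b + μC * μT * (αT * ζC)) := by
    apply mul_pos (sub_pos.mpr hab)
    have : 0 < μT * αC - αT * ζC * b := by linarith
    positivity
  nlinarith [mul_pos hI hk]
end

section
/- Let γ_C = ζ_C·γ, γ_T = ζ_T·γ under condition γ < (μ_T/α_T)·(α_C/ζ_C). Then the ratio at the coexistence steady state I* = ρ_T*/ρ_C* = (α_T·μ_C + α_C·ζ_T·γ)/(α_C·μ_T − α_T·ζ_C·γ) is a strictly increasing function of γ on (0, (μ_T·α_C)/(α_T·ζ_C)), and I* → +∞ as γ → (μ_T·α_C)/(α_T·ζ_C) from below. -/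
theorem stmt_15 (αC αT μC μT ζC ζT : ℝ)
    (hαC : 0 < αC) (hαT : 0 < αT) (hμC : 0 < μC) (hμT : 0 < μT)
    (hζC : 0 < ζC) (hζT : 0 < ζT) :
    StrictMonoOn
      (fun γ : ℝ => (αT * μC + αC * ζT * γ) / (αC * μT - αT * ζC * γ))
      (Set.Ioo 0 (μT * αC / (αT * ζC))) ∧
    Filter.Tendsto
      (fun γ : ℝ => (αT * μC + αC * ζT * γ) / (αC * μT - αT * ζC * γ))
      (nhdsWithin (μT * αC / (αT * ζC)) (Set.Iio (μT * αC / (αT * ζC))))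
      Filter.atTop := by
  set L := μT * αC / (αT * ζC) with hLdef
  have hden : 0 < αT * ζC := mul_pos hαT hζC
  have hLpos : 0 < L := div_pos (mul_pos hμT hαC) hden
  have hdenpos : ∀ γ : ℝ, γ < L → 0 < αC * μT - αT * ζC * γ := by
    intro γ hγ
    have : αT * ζC * γ < αT * ζC * L := by nlinarith
    rw [hLdef, mul_div_cancel₀ _ (ne_of_gt hden)] at this
    nlinarith
  constructor
  · intro a ha b hb hab
    have hda := hdenpos a (ha.2)
    have hdb := hdenpos b (hb.2)
    simp only
    rw [div_lt_div_iff₀ hda hdb]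
    nlinarith [mul_pos (sub_pos.mpr hab)
      (add_pos (mul_pos (mul_pos hαC hζT) (mul_pos hαC hμT))
        (mul_pos (mul_pos hαT hμC) (mul_pos hαT hζC)))]
  · have hnum : Filter.Tendsto (fun γ : ℝ => αT * μC + αC * ζT * γ)
        (nhdsWithin L (Set.Iio L)) (nhds (αT * μC + αC * ζT * L)) := by
      apply Filter.Tendsto.mono_left _ nhdsWithin_le_nhds
      exact Continuous.tendsto (by continuity) L
    have hnumpos : 0 < αT * μC + αC * ζT * L := by positivity
    have hdenL : αC * μT - αT * ζC * L = 0 := by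
      rw [hLdef, mul_div_cancel₀ _ (ne_of_gt hden)]; ring
    have hdentend : Filter.Tendsto (fun γ : ℝ => αC * μT - αT * ζC * γ)
        (nhdsWithin L (Set.Iio L)) (nhdsWithin 0 (Set.Ioi 0)) := by
      apply tendsto_nhdsWithin_of_tendsto_nhds_of_eventually_within
      · have := Continuous.tendsto (show Continuous (fun γ : ℝ => αC * μT - αT * ζC * γ)
          by continuity) L
        rw [hdenL] at this
        exact this.mono_left nhdsWithin_le_nhds
      · filter_upwards [self_mem_nhdsWithin] with x hx
        exact hdenpos x hx
    have hinv : Filter.Tendsto (fun γ : ℝ => (αC * μT - αT * ζC * γ)⁻¹)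
        (nhdsWithin L (Set.Iio L)) Filter.atTop :=
      tendsto_inv_nhdsGT_zero.comp hdentend
    have := Filter.Tendsto.pos_mul_atTop hnumpos hnum hinv
    simpa [div_eq_mul_inv] using this
end
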